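/- Let S be a finite set of red and blue points in the plane with pairwise distinct x and y coordinates, let p ∈ S, and let B be an axis-aligned box with no point of S on the boundary of B or of its quadrants. If B is not safe, then there exists a position p' in the interior of B such that, in the set (S \ {p}) ∪ {p'} with p' keeping the color of p, the point p' participates: some point of the opposite color spans an empty axis-aligned rectangle with p'. -/

import Mathlib

open Classical

noncomputable section

abbrev Pt := ℝ × ℝ

/-- An axis-aligned box in the plane. -/
structure Box where
  x0 : ℝ
  x1 : ℝ
  y0 : ℝ
  y1 : ℝ
  hx : x0 < x1
  hy : y0 < y1

/-- The cross of a box: the union of its vertical and horizontal strips. -/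
def Box.cross (B : Box) : Set Pt :=
  {p | (B.x0 ≤ p.1 ∧ p.1 ≤ B.x1) ∨ (B.y0 ≤ p.2 ∧ p.2 ≤ B.y1)}

/-- The four open quadrants of a box. -/
def Box.NE (B : Box) : Set Pt := {p | B.x1 < p.1 ∧ B.y1 < p.2}
def Box.NW (B : Box) : Set Pt := {p | p.1 < B.x0 ∧ B.y1 < p.2}
def Box.SE (B : Box) : Set Pt := {p | B.x1 < p.1 ∧ p.2 < B.y0}
def Box.SW (B : Box) : Set Pt := {p | p.1 < B.x0 ∧ p.2 < B.y0}

/-- Membership in the open interior of a box. -/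
def Box.inside (B : Box) (p : Pt) : Prop :=
  B.x0 < p.1 ∧ p.1 < B.x1 ∧ B.y0 < p.2 ∧ p.2 < B.y1

/-- Membership in the closed box. -/
def Box.memClosed (B : Box) (p : Pt) : Prop :=
  B.x0 ≤ p.1 ∧ p.1 ≤ B.x1 ∧ B.y0 ≤ p.2 ∧ p.2 ≤ B.y1

/-- `p` avoids the boundary lines of the box and of its quadrants. -/
def Box.offBoundary (B : Box) (p : Pt) : Prop :=
  p.1 ≠ B.x0 ∧ p.1 ≠ B.x1 ∧ p.2 ≠ B.y0 ∧ p.2 ≠ B.y1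

/-- Minimal points of `T` towards the SW corner of the NE quadrant
(the usual minimal points under coordinatewise domination). -/
def neMinSet (T : Set Pt) : Set Pt :=
  {p ∈ T | ∀ q ∈ T, (q.1 ≤ p.1 ∧ q.2 ≤ p.2) → q = p}

/-- Minimal points of `T` towards the SE corner of the NW quadrant. -/
def nwMinSet (T : Set Pt) : Set Pt :=
  {p ∈ T | ∀ q ∈ T, (p.1 ≤ q.1 ∧ q.2 ≤ p.2) → q = p}

/-- Minimal points of `T` towards the NW corner of the SE quadrant. -/
def seMinSet (T : Set Pt) : Set Pt :=
  {p ∈ T | ∀ q ∈ T, (q.1 ≤ p.1 ∧ p.2 ≤ q.2) → q = p}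

/-- Minimal points of `T` towards the NE corner of the SW quadrant
(the usual maximal points under coordinatewise domination). -/
def swMinSet (T : Set Pt) : Set Pt :=
  {p ∈ T | ∀ q ∈ T, (p.1 ≤ q.1 ∧ p.2 ≤ q.2) → q = p}

/-- `z` lies in the open axis-aligned rectangle spanned by `p` and `q`. -/
def openRect (p q z : Pt) : Prop :=
  min p.1 q.1 < z.1 ∧ z.1 < max p.1 q.1 ∧ min p.2 q.2 < z.2 ∧ z.2 < max p.2 q.2

/-- `p` and `q` see each other in `S`: the open rectangle they span is empty of `S`. -/
def sees (S : Set Pt) (p q : Pt) : Prop := ∀ z ∈ S, ¬ openRect p q z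

/-- `p` participates in `S`: some point of the opposite color sees `p`. -/
def participates (S : Set Pt) (color : Pt → Bool) (p : Pt) : Prop :=
  ∃ q ∈ S, color q ≠ color p ∧ sees S p q

/-- All points of `S` in the cross of `B` have color `c`. -/
def crossSafeFor (S : Set Pt) (color : Pt → Bool) (c : Bool) (B : Box) : Prop :=
  ∀ p ∈ S, p ∈ B.cross → color p = c

/-- `B` is `c`-safe for `S`: `c`-cross-safe and the four directional minimal
sets of the quadrants only contain points of color `c`. -/
def safeFor (S : Set Pt) (color : Pt → Bool) (c : Bool) (B : Box) : Prop :=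
  crossSafeFor S color c B ∧
  (∀ p ∈ neMinSet (S ∩ B.NE), color p = c) ∧
  (∀ p ∈ nwMinSet (S ∩ B.NW), color p = c) ∧
  (∀ p ∈ seMinSet (S ∩ B.SE), color p = c) ∧
  (∀ p ∈ swMinSet (S ∩ B.SW), color p = c)

/-- `B` is safe: red-safe (`true`) or blue-safe (`false`). -/
def isSafe (S : Set Pt) (color : Pt → Bool) (B : Box) : Prop :=
  safeFor S color true B ∨ safeFor S color false B

/-- General position: pairwise distinct x-coordinates and y-coordinates. -/
def genPos (S : Set Pt) : Prop :=
  ∀ p ∈ S, ∀ q ∈ S, p ≠ q → p.1 ≠ q.1 ∧ p.2 ≠ q.2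

/-!
Take `c` to be the colour of `p`. As `B` is not `c`-safe, some point `q` of the other colour lies
in the cross of `B` or on one of the four directional minimal sets. If `q` lies in a strip of the
cross, move `p` inside `B` just beside `q` across that strip, so that no point of `S` has a
coordinate strictly between the two. Otherwise put `p` inside `B` so close to the corner of `B`
facing `q` that no coordinate of a point of `S` falls between it and the box edges: a point of `S`
in the rectangle spanned by `p` and `q` would then lie in the quadrant of `q` and dominate `q`
towards that corner, contradicting minimality.
-/

theorem Finset.exists_mem_Ioo_near_right {ι α : Type*} [LinearOrder α] [DenselyOrdered α]
    (s : Finset ι) (f : ι → α) {u v : α} (h : u < v) :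
    ∃ a ∈ Set.Ioo u v, ∀ i ∈ s, a < f i → v ≤ f i := by
  set t := insert u ((s.image f).filter (· < v))
  have ht_lt : ∀ x ∈ t, x < v := by
    simp only [t, Finset.forall_mem_insert, Finset.mem_filter]
    exact ⟨h, fun _ hx => hx.2⟩
  have ht : t.Nonempty := Finset.insert_nonempty _ _
  obtain ⟨a, hma, hav⟩ := _root_.exists_between (ht_lt _ (t.max'_mem ht))
  refine ⟨a, ⟨(t.le_max' u (Finset.mem_insert_self _ _)).trans_lt hma, hav⟩, fun i hi hai => ?_⟩
  by_contra! hiv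
  have hit : f i ∈ t := Finset.mem_insert_of_mem 
    (Finset.mem_filter.2 ⟨Finset.mem_image_of_mem f hi, hiv⟩)
  exact (hai.trans_le' ((t.le_max' _ hit).trans hma.le)).false

theorem Finset.exists_mem_Ioo_near_left {ι α : Type*} [LinearOrder α] [DenselyOrdered α]
    (s : Finset ι) (f : ι → α) {u v : α} (h : u < v) :
    ∃ a ∈ Set.Ioo u v, ∀ i ∈ s, f i < a → f i ≤ u := by
  obtain ⟨a, ha, hgap⟩ := s.exists_mem_Ioo_near_right (α := αᵒᵈ) (OrderDual.toDual ∘ f)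
    (OrderDual.toDual_lt_toDual.2 h)
  exact ⟨OrderDual.ofDual a, ⟨ha.2, ha.1⟩, hgap⟩

theorem openRect_iff {p q z : Pt} :
    openRect p q z ↔ z.1 ∈ Set.uIoo p.1 q.1 ∧ z.2 ∈ Set.uIoo p.2 q.2 := by
  simp only [openRect, Set.uIoo, Set.mem_Ioo, and_assoc]

theorem isSafe_of_safeFor {S : Set Pt} {color : Pt → Bool} {c : Bool} {B : Box}
    (h : safeFor S color c B) : isSafe S color B := by
  cases c
  exacts [Or.inr h, Or.inl h]

theorem participates_update_of_sees {S : Set Pt} {color : Pt → Bool} {p q p' : Pt}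
    (hq : q ∈ S) (hcol : color q ≠ color p) (hne : p' ≠ q) (hsees : sees S p' q) :
    participates ((S \ {p}) ∪ {p'}) (Function.update color p' (color p)) p' := by
  refine ⟨q, Or.inl ⟨hq, fun h => hcol (congrArg color h)⟩, ?_, ?_⟩
  · rwa [Function.update_of_ne hne.symm, Function.update_self]
  · rintro z (⟨hz, -⟩ | rfl) hr
    · exact hsees z hz hr
    · exact Set.left_notMem_uIoo (openRect_iff.1 hr).1

section Visibility

variable {S : Finset Pt} {B : Box} {q : Pt}

theorem exists_sees_of_mem_cross (hbd : ∀ z ∈ S, B.offBoundary z) (hq : q ∈ S)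
    (hc : q ∈ B.cross) : ∃ p', B.inside p' ∧ p' ≠ q ∧ sees S p' q := by
  obtain ⟨hq0, -, hq2, -⟩ := hbd q hq
  rcases hc with ⟨hx0, hx1⟩ | ⟨hy0, hy1⟩
  · obtain ⟨a, ha, hgap⟩ := S.exists_mem_Ioo_near_right Prod.fst (hx0.lt_of_ne' hq0)
    obtain ⟨b, hb⟩ := exists_between B.hy
    refine ⟨(a, b), ⟨ha.1, ha.2.trans_le hx1, hb⟩, fun h => ha.2.ne (congrArg Prod.fst h), ?_⟩
    intro z hz hr
    rw [openRect_iff, Set.uIoo_of_lt ha.2] at hr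
    exact (hgap z hz hr.1.1).not_gt hr.1.2
  · obtain ⟨b, hb, hgap⟩ := S.exists_mem_Ioo_near_right Prod.snd (hy0.lt_of_ne' hq2)
    obtain ⟨a, ha⟩ := exists_between B.hx
    refine ⟨(a, b), ⟨ha.1, ha.2, hb.1, hb.2.trans_le hy1⟩, fun h => hb.2.ne (congrArg Prod.snd h), ?_⟩
    intro z hz hr
    rw [openRect_iff, Set.uIoo_of_lt hb.2] at hr
    exact (hgap z hz hr.2.1).not_gt hr.2.2

theorem exists_sees_of_mem_neMinSet (hbd : ∀ z ∈ S, B.offBoundary z)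
    (hq : q ∈ neMinSet (↑S ∩ B.NE)) : ∃ p', B.inside p' ∧ p' ≠ q ∧ sees S p' q := by
  obtain ⟨⟨-, hqx, hqy⟩, hmin⟩ := hq
  obtain ⟨a, ha, hgx⟩ := S.exists_mem_Ioo_near_right Prod.fst B.hx
  obtain ⟨b, hb, hgy⟩ := S.exists_mem_Ioo_near_right Prod.snd B.hy
  have haq := ha.2.trans hqx
  refine ⟨(a, b), ⟨ha.1, ha.2, hb.1, hb.2⟩, fun h => haq.ne (congrArg Prod.fst h), ?_⟩
  intro z hz hr
  rw [openRect_iff, Set.uIoo_of_lt haq, Set.uIoo_of_lt (hb.2.trans hqy)] at hr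
  obtain ⟨⟨hz1, hzq1⟩, hz2, hzq2⟩ := hr
  have hzx : B.x1 < z.1 := (hgx z hz hz1).lt_of_ne (hbd z hz).2.1.symm
  have hzy : B.y1 < z.2 := (hgy z hz hz2).lt_of_ne (hbd z hz).2.2.2.symm
  exact hzq1.ne (congrArg Prod.fst (hmin z ⟨hz, hzx, hzy⟩ ⟨hzq1.le, hzq2.le⟩))

theorem exists_sees_of_mem_nwMinSet (hbd : ∀ z ∈ S, B.offBoundary z)
    (hq : q ∈ nwMinSet (↑S ∩ B.NW)) : ∃ p', B.inside p' ∧ p' ≠ q ∧ sees S p' q := by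
  obtain ⟨⟨-, hqx, hqy⟩, hmin⟩ := hq
  obtain ⟨a, ha, hgx⟩ := S.exists_mem_Ioo_near_left Prod.fst B.hx
  obtain ⟨b, hb, hgy⟩ := S.exists_mem_Ioo_near_right Prod.snd B.hy
  have hqa := hqx.trans ha.1
  refine ⟨(a, b), ⟨ha.1, ha.2, hb.1, hb.2⟩, fun h => hqa.ne' (congrArg Prod.fst h), ?_⟩
  intro z hz hr
  rw [openRect_iff, Set.uIoo_of_gt hqa, Set.uIoo_of_lt (hb.2.trans hqy)] at hr
  obtain ⟨⟨hqz1, hz1⟩, hz2, hzq2⟩ := hr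
  have hzx : z.1 < B.x0 := (hgx z hz hz1).lt_of_ne (hbd z hz).1
  have hzy : B.y1 < z.2 := (hgy z hz hz2).lt_of_ne (hbd z hz).2.2.2.symm
  exact hqz1.ne' (congrArg Prod.fst (hmin z ⟨hz, hzx, hzy⟩ ⟨hqz1.le, hzq2.le⟩))

theorem exists_sees_of_mem_seMinSet (hbd : ∀ z ∈ S, B.offBoundary z)
    (hq : q ∈ seMinSet (↑S ∩ B.SE)) : ∃ p', B.inside p' ∧ p' ≠ q ∧ sees S p' q := by
  obtain ⟨⟨-, hqx, hqy⟩, hmin⟩ := hq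
  obtain ⟨a, ha, hgx⟩ := S.exists_mem_Ioo_near_right Prod.fst B.hx
  obtain ⟨b, hb, hgy⟩ := S.exists_mem_Ioo_near_left Prod.snd B.hy
  have haq := ha.2.trans hqx
  refine ⟨(a, b), ⟨ha.1, ha.2, hb.1, hb.2⟩, fun h => haq.ne (congrArg Prod.fst h), ?_⟩
  intro z hz hr
  rw [openRect_iff, Set.uIoo_of_lt haq, Set.uIoo_of_gt (hqy.trans hb.1)] at hr
  obtain ⟨⟨hz1, hzq1⟩, hqz2, hz2⟩ := hr
  have hzx : B.x1 < z.1 := (hgx z hz hz1).lt_of_ne (hbd z hz).2.1.symm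
  have hzy : z.2 < B.y0 := (hgy z hz hz2).lt_of_ne (hbd z hz).2.2.1
  exact hzq1.ne (congrArg Prod.fst (hmin z ⟨hz, hzx, hzy⟩ ⟨hzq1.le, hqz2.le⟩))

theorem exists_sees_of_mem_swMinSet (hbd : ∀ z ∈ S, B.offBoundary z)
    (hq : q ∈ swMinSet (↑S ∩ B.SW)) : ∃ p', B.inside p' ∧ p' ≠ q ∧ sees S p' q := by
  obtain ⟨⟨-, hqx, hqy⟩, hmin⟩ := hq
  obtain ⟨a, ha, hgx⟩ := S.exists_mem_Ioo_near_left Prod.fst B.hx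
  obtain ⟨b, hb, hgy⟩ := S.exists_mem_Ioo_near_left Prod.snd B.hy
  have hqa := hqx.trans ha.1
  refine ⟨(a, b), ⟨ha.1, ha.2, hb.1, hb.2⟩, fun h => hqa.ne' (congrArg Prod.fst h), ?_⟩
  intro z hz hr
  rw [openRect_iff, Set.uIoo_of_gt hqa, Set.uIoo_of_gt (hqy.trans hb.1)] at hr
  obtain ⟨⟨hqz1, hz1⟩, hqz2, hz2⟩ := hr
  have hzx : z.1 < B.x0 := (hgx z hz hz1).lt_of_ne (hbd z hz).1
  have hzy : z.2 < B.y0 := (hgy z hz hz2).lt_of_ne (hbd z hz).2.2.1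
  exact hqz1.ne' (congrArg Prod.fst (hmin z ⟨hz, hzx, hzy⟩ ⟨hqz1.le, hqz2.le⟩))

theorem exists_sees_of_not_safeFor {color : Pt → Bool} {c : Bool}
    (hbd : ∀ z ∈ S, B.offBoundary z) (h : ¬ safeFor (↑S) color c B) :
    ∃ q ∈ S, color q ≠ c ∧ ∃ p', B.inside p' ∧ p' ≠ q ∧ sees S p' q := by
  simp only [safeFor, crossSafeFor, not_and_or, not_forall, exists_prop] at h
  rcases h with ⟨q, hq, hc, hcol⟩ | ⟨q, hq, hcol⟩ | ⟨q, hq, hcol⟩ | ⟨q, hq, hcol⟩ | ⟨q, hq, hcol⟩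
  · exact ⟨q, hq, hcol, exists_sees_of_mem_cross hbd hq hc⟩
  · exact ⟨q, hq.1.1, hcol, exists_sees_of_mem_neMinSet hbd hq⟩
  · exact ⟨q, hq.1.1, hcol, exists_sees_of_mem_nwMinSet hbd hq⟩
  · exact ⟨q, hq.1.1, hcol, exists_sees_of_mem_seMinSet hbd hq⟩
  · exact ⟨q, hq.1.1, hcol, exists_sees_of_mem_swMinSet hbd hq⟩

end Visibility

theorem stmt2_general (S : Finset Pt) (color : Pt → Bool)
    (B : Box) (hbd : ∀ q ∈ S, B.offBoundary q)
    (p : Pt)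
    (hunsafe : ¬ isSafe (↑S : Set Pt) color B) :
    ∃ p' : Pt, B.inside p' ∧
      participates (((↑S : Set Pt) \ {p}) ∪ {p'})
        (Function.update color p' (color p)) p' := by
  obtain ⟨q, hq, hcol, p', hin, hne, hsees⟩ :=
    exists_sees_of_not_safeFor hbd fun h => hunsafe (isSafe_of_safeFor (c := color p) h)
  exact ⟨p', hin, participates_update_of_sees hq hcol hne hsees⟩

/-- If `B` is not safe, a point `p ∈ S` can be moved inside `B` so that it participates. -/
theorem stmt2 (S : Finset Pt) (color : Pt → Bool) (hgp : genPos (↑S : Set Pt))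
    (B : Box) (hbd : ∀ q ∈ S, B.offBoundary q)
    (p : Pt) (hp : p ∈ S)
    (hunsafe : ¬ isSafe (↑S : Set Pt) color B) :
    ∃ p' : Pt, B.inside p' ∧
      participates (((↑S : Set Pt) \ {p}) ∪ {p'})
        (Function.update color p' (color p)) p' :=
  stmt2_general S color B hbd p hunsafe
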